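/- arXiv:1603.05697 — 2 statements merged into one kernel-verified Lean document; each statement's English description precedes it below -/
import Mathlib

section
/- Let V : (0, ∞) → ℝ be a differentiable solution of the scalar Riccati equation v' + v² + κ = 0 on (0,∞), where κ : (0,∞) → ℝ is continuous with κ(t) ≥ −k² for all t. Then |v(t)| ≤ k·coth(k t) for all t > 0. -/
/-!
A solution `v` is a subsolution of the Riccati equation `w' = k² - w²`, so it can be compared with
strict supersolutions. The barriers `K coth (K (t - ε))`, `K > |k|`, blow up at `t = ε`, where `v`
is finite, hence lie above `v` on `(ε, ∞)`; letting `ε → 0` and `K → k` gives `v t ≤ k coth (k t)`.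
The barriers `-m + 1 / (t - c)`, `m > |k|`, drop to `-∞` at `t = c`: starting one of them at a point
where `v < -|k|` would force `v` to blow down before `c`, so `v ≥ -|k| ≥ -k coth (k t)`.
-/

open Real Set Filter Topology

namespace Real

noncomputable def coth (x : ℝ) : ℝ := cosh x / sinh x

lemma one_lt_coth {x : ℝ} (hx : 0 < x) : 1 < coth x :=
  (one_lt_div (sinh_pos_iff.2 hx)).2 (sinh_lt_cosh x)

lemma hasDerivAt_coth {x : ℝ} (hx : x ≠ 0) : HasDerivAt coth (1 - coth x ^ 2) x := by
  have hs : sinh x ≠ 0 := sinh_ne_zero.2 hx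
  refine ((hasDerivAt_cosh x).div (hasDerivAt_sinh x) hs).congr_deriv ?_
  rw [coth, div_pow]
  field_simp

lemma tendsto_coth_nhdsGT_zero : Tendsto coth (𝓝[>] 0) atTop := by
  have hsinh : Tendsto sinh (𝓝[>] 0) (𝓝[>] 0) := by
    refine tendsto_nhdsWithin_iff.2 ⟨?_, ?_⟩
    · simpa using continuous_sinh.continuousWithinAt.tendsto (s := Ioi 0) (x := 0)
    · filter_upwards [self_mem_nhdsWithin] with x hx using sinh_pos_iff.2 hx
  have hcosh : Tendsto cosh (𝓝[>] 0) (𝓝 1) := by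
    simpa using continuous_cosh.continuousWithinAt.tendsto (s := Ioi 0) (x := 0)
  exact (hcosh.pos_mul_atTop one_pos hsinh.inv_tendsto_nhdsGT_zero).congr fun x =>
    (div_eq_mul_inv _ _).symm

end Real

lemma le_of_riccati_sub_of_strict_super {f f' B B' : ℝ → ℝ} {k a b : ℝ}
    (hf : ∀ t ∈ Icc a b, HasDerivAt f (f' t) t) (hf' : ∀ t ∈ Icc a b, f' t ≤ k ^ 2 - f t ^ 2)
    (hB : ∀ t ∈ Icc a b, HasDerivAt B (B' t) t) (hB' : ∀ t ∈ Icc a b, k ^ 2 - B t ^ 2 < B' t)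
    (ha : f a ≤ B a) : ∀ t ∈ Icc a b, f t ≤ B t :=
  image_le_of_deriv_right_lt_deriv_boundary'
    (fun t ht => (hf t ht).continuousAt.continuousWithinAt)
    (fun t ht => (hf t (Ico_subset_Icc_self ht)).hasDerivWithinAt) ha
    (fun t ht => (hB t ht).continuousAt.continuousWithinAt)
    (fun t ht => (hB t (Ico_subset_Icc_self ht)).hasDerivWithinAt)
    (fun t ht hfB => by
      have h := hf' t (Ico_subset_Icc_self ht)
      rw [hfB] at h
      exact h.trans_lt (hB' t (Ico_subset_Icc_self ht)))

lemma hasDerivAt_mul_coth_mul_sub {K ε t : ℝ} (hK : K ≠ 0) (ht : t ≠ ε) :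
    HasDerivAt (fun s => K * coth (K * (s - ε))) (K ^ 2 - (K * coth (K * (t - ε))) ^ 2) t := by
  have hlin : HasDerivAt (fun s => K * (s - ε)) K t := by
    simpa using ((hasDerivAt_id t).sub_const ε).const_mul K
  have hcoth := hasDerivAt_coth (mul_ne_zero hK (sub_ne_zero.2 ht))
  refine ((hcoth.comp t hlin).const_mul K).congr_deriv ?_
  ring

lemma le_mul_coth_of_riccati_sub {v v' : ℝ → ℝ} {k K ε t : ℝ}
    (hv : ∀ s > 0, HasDerivAt v (v' s) s) (hsub : ∀ s > 0, v' s ≤ k ^ 2 - v s ^ 2)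
    (hkK : |k| < K) (hε : 0 < ε) (hεt : ε < t) : v t ≤ K * coth (K * (t - ε)) := by
  have hK : 0 < K := (abs_nonneg k).trans_lt hkK
  have hk2 : k ^ 2 < K ^ 2 := sq_lt_sq.2 (by rwa [abs_of_pos hK])
  have hblow : Tendsto (fun s => K * coth (K * (s - ε))) (𝓝[>] ε) atTop := by
    refine (tendsto_coth_nhdsGT_zero.comp (tendsto_nhdsWithin_iff.2 ⟨?_, ?_⟩)).const_mul_atTop hK
    · have hlin : Continuous fun s => K * (s - ε) := by fun_prop
      simpa using (hlin.tendsto ε).mono_left nhdsWithin_le_nhds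
    · filter_upwards [self_mem_nhdsWithin] with s hs using mul_pos hK (sub_pos.2 hs)
  have hvε : Tendsto v (𝓝[>] ε) (𝓝 (v ε)) :=
    (hv ε hε).continuousAt.tendsto.mono_left nhdsWithin_le_nhds
  obtain ⟨a, hBa, hva, haε, hat⟩ : ∃ a, v ε + 1 ≤ K * coth (K * (a - ε)) ∧ v a ≤ v ε + 1 ∧
      a ∈ Ioo ε t :=
    ((hblow.eventually_ge_atTop _).and ((hvε.eventually (eventually_le_nhds (lt_add_one _))).and
      (Ioo_mem_nhdsGT hεt))).exists
  have hpos : ∀ s ∈ Icc a t, 0 < s := fun s hs => hε.trans (haε.trans_le hs.1)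
  refine le_of_riccati_sub_of_strict_super (fun s hs => hv s (hpos s hs))
    (fun s hs => hsub s (hpos s hs))
    (fun s hs => hasDerivAt_mul_coth_mul_sub hK.ne' (haε.trans_le hs.1).ne')
    (fun s _ => by linarith) (hva.trans hBa) t ⟨hat.le, le_rfl⟩

lemma le_coth_of_riccati_sub {v v' : ℝ → ℝ} {k : ℝ} (hk : 0 < k)
    (hv : ∀ s > 0, HasDerivAt v (v' s) s) (hsub : ∀ s > 0, v' s ≤ k ^ 2 - v s ^ 2)
    {t : ℝ} (ht : 0 < t) : v t ≤ k * coth (k * t) := by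
  have hcont : ContinuousAt (fun ε => (k + ε) * coth ((k + ε) * (t - ε))) 0 := by
    exact (continuousAt_const.add continuousAt_id).mul (ContinuousAt.comp_of_eq
      (hasDerivAt_coth (mul_pos hk ht).ne').continuousAt (by fun_prop) (by simp))
  refine ge_of_tendsto (by simpa using hcont.tendsto.mono_left (nhdsWithin_le_nhds (s := Ioi 0))) ?_
  filter_upwards [Ioo_mem_nhdsGT ht] with ε hε
  exact le_mul_coth_of_riccati_sub hv hsub (by rw [abs_of_pos hk]; linarith [hε.1]) hε.1 hε.2

lemma neg_abs_le_of_riccati_sub {v v' : ℝ → ℝ} {k : ℝ}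
    (hv : ∀ s > 0, HasDerivAt v (v' s) s) (hsub : ∀ s > 0, v' s ≤ k ^ 2 - v s ^ 2)
    {t : ℝ} (ht : 0 < t) : -|k| ≤ v t := by
  by_contra! hvt
  obtain ⟨m, hkm, hmv⟩ := exists_between (lt_neg_of_lt_neg hvt)
  have hm : 0 < m := (abs_nonneg k).trans_lt hkm
  have hk2 : k ^ 2 < m ^ 2 := sq_lt_sq.2 (by rwa [abs_of_pos hm])
  have hgap : 0 < -v t - m := sub_pos.2 hmv
  set c := t + (-v t - m)⁻¹
  have htc : t < c := lt_add_of_pos_right _ (inv_pos.2 hgap)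
  have hB : ∀ s ≠ c, HasDerivAt (fun s => -m + (s - c)⁻¹) (-1 / (s - c) ^ 2) s := fun s hs => by
    simpa using (((hasDerivAt_id s).sub_const c).inv (sub_ne_zero.2 hs)).const_add (-m)
  have hvB : ∀ b ∈ Ioo t c, v b ≤ -m + (b - c)⁻¹ := fun b hb => by
    have hBt : v t = -m + (t - c)⁻¹ := by
      simp only [c, sub_add_cancel_left, inv_neg, inv_inv]
      ring
    refine le_of_riccati_sub_of_strict_super (fun s hs => hv s (ht.trans_le hs.1))
      (fun s hs => hsub s (ht.trans_le hs.1)) (fun s hs => hB s (hs.2.trans_lt hb.2).ne)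
      (fun s hs => ?_) hBt.le b ⟨hb.1.le, le_rfl⟩
    have hsc : s - c < 0 := by linarith [hs.2, hb.2]
    have hu : (s - c)⁻¹ < 0 := inv_lt_zero.2 hsc
    rw [div_eq_mul_inv, ← inv_pow]
    nlinarith [mul_neg_of_pos_of_neg hm hu]
  have hdrop : Tendsto (fun s => -m + (s - c)⁻¹) (𝓝[<] c) atBot := by
    refine tendsto_const_nhds.add_atBot (Tendsto.inv_tendsto_nhdsLT_zero ?_)
    refine tendsto_nhdsWithin_iff.2 ⟨?_, ?_⟩
    · simpa using ((continuous_sub_right c).tendsto c).mono_left nhdsWithin_le_nhds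
    · filter_upwards [self_mem_nhdsWithin] with s (hs : s < c) using sub_neg.2 hs
  exact not_tendsto_atBot_of_tendsto_nhds
    ((hv c (ht.trans htc)).continuousAt.tendsto.mono_left nhdsWithin_le_nhds)
    (tendsto_atBot_mono' _ (eventually_of_mem (Ioo_mem_nhdsLT htc) hvB) hdrop)

theorem scalar_riccati_bound_general
    (v κ : ℝ → ℝ) (k : ℝ) (hk : 0 < k)
    (hκlow : ∀ t > (0 : ℝ), -k ^ 2 ≤ κ t)
    (hv : ∀ t > (0 : ℝ), HasDerivAt v (-(v t ^ 2 + κ t)) t) :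
    ∀ t > (0 : ℝ), |v t| ≤ k * (Real.cosh (k * t) / Real.sinh (k * t)) := by
  have hsub : ∀ t > (0 : ℝ), -(v t ^ 2 + κ t) ≤ k ^ 2 - v t ^ 2 := fun t ht => by
    linarith [hκlow t ht]
  intro t ht
  refine abs_le.2 ⟨?_, le_coth_of_riccati_sub hk hv hsub ht⟩
  calc -(k * coth (k * t)) ≤ -k := by nlinarith [one_lt_coth (mul_pos hk ht)]
    _ = -|k| := by rw [abs_of_pos hk]
    _ ≤ v t := neg_abs_le_of_riccati_sub hv hsub ht

/-- Hopf–Green Riccati comparison (scalar case): a solution of `v' + v² + κ = 0`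
on `(0,∞)` with `κ(t) ≥ −k²` satisfies `|v(t)| ≤ k coth(kt)`. -/
theorem scalar_riccati_bound
    (v κ : ℝ → ℝ) (k : ℝ) (hk : 0 < k)
    (hκ : ContinuousOn κ (Set.Ioi 0))
    (hκlow : ∀ t > (0 : ℝ), -k ^ 2 ≤ κ t)
    (hv : ∀ t > (0 : ℝ), HasDerivAt v (-(v t ^ 2 + κ t)) t) :
    ∀ t > (0 : ℝ), |v t| ≤ k * (Real.cosh (k * t) / Real.sinh (k * t)) :=
  scalar_riccati_bound_general v κ k hk hκlow hv
end

section
/- Let A be as in the no-conjugate-points setting (A'' + KA = 0, A(0)=0, A'(0)=I, A(t) invertible for t ≠ 0). For s, t of the same sign with 0 < s < t (or t < s < 0), the unique Jacobi field D_t with D_t(0) = I and D_t(t) = 0 satisfies D_t(s) = A(s) · ∫ₛᵗ A(ℓ)⁻¹ A(ℓ)⁻¹ᵀ dℓ. -/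
/-!
For solutions `X, Y` of `X'' + K X = 0` with `K` symmetric, the Wronskian
`X'ᵀ Y - Xᵀ Y'` is constant. Evaluating at `0` gives `A'ᵀ A = Aᵀ A'` and `A'ᵀ D_t - Aᵀ D_t' = 1`,
and together these say exactly that `(A⁻¹ D_t)' = -A⁻¹ A⁻¹ᵀ` wherever `A` is invertible.
Integrating from `s` to `t` and using `D_t(t) = 0` gives the formula.
-/

open Matrix MeasureTheory

noncomputable section

attribute [local instance] Matrix.normedAddCommGroup Matrix.normedSpace

def opNorm {m : ℕ} (M : Matrix (Fin m) (Fin m) ℝ) : ℝ :=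
  ‖Matrix.toEuclideanCLM (𝕜 := ℝ) M‖

variable {n : Type*} [Fintype n]

theorem HasDerivAt.matrix_transpose {f : ℝ → Matrix n n ℝ} {f' : Matrix n n ℝ} {x : ℝ}
    (hf : HasDerivAt f f' x) : HasDerivAt (fun s => (f s)ᵀ) f'ᵀ x :=
  hasDerivAt_pi.2 fun i => hasDerivAt_pi.2 fun j =>
    hasDerivAt_pi.1 (hasDerivAt_pi.1 hf j) i

variable [DecidableEq n]

section Calculus

attribute [local instance] Matrix.linftyOpNormedRing Matrix.linftyOpNormedAlgebra

variable {f g : ℝ → Matrix n n ℝ} {f' g' : Matrix n n ℝ} {x : ℝ}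

theorem HasDerivAt.matrix_mul (hf : HasDerivAt f f' x) (hg : HasDerivAt g g' x) :
    HasDerivAt (fun s => f s * g s) (f' * g x + f x * g') x :=
  hf.fun_mul hg

theorem HasDerivAt.matrix_inv (hf : HasDerivAt f f' x) (hfx : IsUnit (f x)) :
    HasDerivAt (fun s => (f s)⁻¹) (-((f x)⁻¹ * f' * (f x)⁻¹)) x := by
  -- instance search fails here: it mixes the ambient entrywise norm with the operator norm
  have : HasSummableGeomSeries (Matrix n n ℝ) :=
    @instHasSummableGeomSeriesOfCompleteSpace _ _ (FiniteDimensional.complete ℝ _)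
  have h := (hasFDerivAt_ringInverse hfx.unit).comp_hasDerivAt x hf
  simp only [← Ring.inverse_unit, IsUnit.unit_spec, Function.comp_def,
    ← nonsing_inv_eq_ringInverse, _root_.neg_apply,
    ContinuousLinearMap.mulLeftRight_apply] at h
  exact h

end Calculus

def IsJacobiSolution (K X X' : ℝ → Matrix n n ℝ) : Prop :=
  ∀ s, HasDerivAt X (X' s) s ∧ HasDerivAt X' (-(K s * X s)) s

def wronskian (X X' Y Y' : ℝ → Matrix n n ℝ) (s : ℝ) : Matrix n n ℝ :=
  (X' s)ᵀ * Y s - (X s)ᵀ * Y' s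

theorem IsJacobiSolution.wronskian_eq {K X X' Y Y' : ℝ → Matrix n n ℝ}
    (hKsymm : ∀ s, (K s)ᵀ = K s) (hX : IsJacobiSolution K X X') (hY : IsJacobiSolution K Y Y')
    (s u : ℝ) : wronskian X X' Y Y' s = wronskian X X' Y Y' u := by
  have hW : ∀ s, HasDerivAt (wronskian X X' Y Y') 0 s := fun s => by
    have h := (((hX s).2.matrix_transpose).matrix_mul (hY s).1).sub
      (((hX s).1.matrix_transpose).matrix_mul (hY s).2)
    refine h.congr_deriv ?_
    rw [transpose_neg, transpose_mul, hKsymm]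
    noncomm_ring
  exact is_const_of_deriv_eq_zero (fun v => (hW v).differentiableAt) (fun v => (hW v).deriv) s u

theorem inv_mul_deriv_eq_of_wronskian {a a' d d' : Matrix n n ℝ} (ha : IsUnit a)
    (haa : a'ᵀ * a = aᵀ * a') (had : a'ᵀ * d - aᵀ * d' = 1) :
    -(a⁻¹ * a' * a⁻¹) * d + a⁻¹ * d' = -(a⁻¹ * a⁻¹ᵀ) := by
  have hdet := (isUnit_iff_isUnit_det a).1 ha
  have hT : a⁻¹ᵀ * aᵀ = 1 := by rw [← transpose_mul, mul_nonsing_inv _ hdet, transpose_one]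
  calc -(a⁻¹ * a' * a⁻¹) * d + a⁻¹ * d'
      = a⁻¹ * (a⁻¹ᵀ * aᵀ) * (d' - a' * a⁻¹ * d) := by rw [hT]; noncomm_ring
    _ = a⁻¹ * a⁻¹ᵀ * (aᵀ * d' - (aᵀ * a') * a⁻¹ * d) := by noncomm_ring
    _ = a⁻¹ * a⁻¹ᵀ * (aᵀ * d' - a'ᵀ * d) := by
      rw [← haa, mul_assoc (a'ᵀ), mul_nonsing_inv _ hdet, mul_one]
    _ = -(a⁻¹ * a⁻¹ᵀ) := by rw [← neg_sub, had]; noncomm_ring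

theorem IsJacobiSolution.eq_mul_integral {K A A' D D' : ℝ → Matrix n n ℝ} {s t : ℝ}
    (hA : IsJacobiSolution K A A') (hD : IsJacobiSolution K D D')
    (hAA : ∀ ℓ, wronskian A A' A A' ℓ = 0) (hAD : ∀ ℓ, wronskian A A' D D' ℓ = 1)
    (hinv : ∀ ℓ ∈ Set.uIcc s t, IsUnit (A ℓ)) (hDt : D t = 0) :
    D s = A s * ∫ ℓ in s..t, (A ℓ)⁻¹ * ((A ℓ)⁻¹)ᵀ := by
  have hF : ∀ ℓ ∈ Set.uIcc s t,
      HasDerivAt (fun ℓ => (A ℓ)⁻¹ * D ℓ) (-((A ℓ)⁻¹ * ((A ℓ)⁻¹)ᵀ)) ℓ := fun ℓ hℓ =>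
    (((hA ℓ).1.matrix_inv (hinv ℓ hℓ)).matrix_mul (hD ℓ).1).congr_deriv <|
      inv_mul_deriv_eq_of_wronskian (hinv ℓ hℓ) (sub_eq_zero.1 (hAA ℓ)) (hAD ℓ)
  have hcont : ContinuousOn (fun ℓ => (A ℓ)⁻¹ * ((A ℓ)⁻¹)ᵀ) (Set.uIcc s t) := fun ℓ hℓ =>
    have hinv' := (hA ℓ).1.matrix_inv (hinv ℓ hℓ)
    (hinv'.matrix_mul hinv'.matrix_transpose).continuousAt.continuousWithinAt
  have hFTC := intervalIntegral.integral_eq_sub_of_hasDerivAt hF hcont.intervalIntegrable.neg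
  rw [intervalIntegral.integral_neg, hDt, mul_zero, zero_sub, neg_inj] at hFTC
  rw [hFTC, ← mul_assoc, mul_nonsing_inv _
    ((isUnit_iff_isUnit_det _).1 (hinv s Set.left_mem_uIcc)), one_mul]

theorem D_formula_general {m : ℕ}
    (K A A' : ℝ → Matrix (Fin m) (Fin m) ℝ)
    (D D' : ℝ → ℝ → Matrix (Fin m) (Fin m) ℝ)
    (hKsymm : ∀ t, (K t)ᵀ = K t)
    (hA : ∀ t, HasDerivAt A (A' t) t)
    (hA' : ∀ t, HasDerivAt A' (-(K t * A t)) t)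
    (hA0 : A 0 = 0) (hA'0 : A' 0 = 1)
    (hinv : ∀ t ≠ (0 : ℝ), IsUnit (A t))
    (hD : ∀ t ≠ (0 : ℝ), ∀ s, HasDerivAt (D t) (D' t s) s)
    (hD' : ∀ t ≠ (0 : ℝ), ∀ s, HasDerivAt (D' t) (-(K s * D t s)) s)
    (hD0 : ∀ t ≠ (0 : ℝ), D t 0 = 1)
    (hDt : ∀ t ≠ (0 : ℝ), D t t = 0) :
    ∀ s t : ℝ, (0 < s ∧ s < t) ∨ (t < s ∧ s < 0) →
      D t s = A s * ∫ ℓ in s..t, (A ℓ)⁻¹ * ((A ℓ)⁻¹)ᵀ := by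
  intro s t hst
  have h0 : (0 : ℝ) ∉ Set.uIcc s t := by
    rcases hst with ⟨hs, hst⟩ | ⟨hts, hs⟩
    exacts [Set.notMem_uIcc_of_lt hs (hs.trans hst), Set.notMem_uIcc_of_gt hs (hts.trans hs)]
  have ht : t ≠ 0 := fun h => h0 (h ▸ Set.right_mem_uIcc)
  have hAJ : IsJacobiSolution K A A' := fun s => ⟨hA s, hA' s⟩
  have hDJ : IsJacobiSolution K (D t) (D' t) := fun s => ⟨hD t ht s, hD' t ht s⟩
  refine hAJ.eq_mul_integral hDJ (fun ℓ => ?_) (fun ℓ => ?_)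
    (fun ℓ hℓ => hinv ℓ fun h => h0 (h ▸ hℓ)) (hDt t ht)
  · rw [hAJ.wronskian_eq hKsymm hAJ ℓ 0, wronskian, hA0]
    simp
  · rw [hAJ.wronskian_eq hKsymm hDJ ℓ 0, wronskian, hA0, hA'0, hD0 t ht]
    simp

/-- In the no-conjugate-points setting, the boundary Jacobi field `D_t` (with
`D_t(0) = 1`, `D_t(t) = 0`) is given by `D_t(s) = A(s) ∫ₛᵗ A(ℓ)⁻¹ A(ℓ)⁻¹ᵀ dℓ`
for `s, t` of the same sign with `0 < s < t` or `t < s < 0`. -/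
theorem D_formula {m : ℕ}
    (K A A' : ℝ → Matrix (Fin m) (Fin m) ℝ)
    (D D' : ℝ → ℝ → Matrix (Fin m) (Fin m) ℝ)
    (hK : Continuous K)
    (hKsymm : ∀ t, (K t)ᵀ = K t)
    (hA : ∀ t, HasDerivAt A (A' t) t)
    (hA' : ∀ t, HasDerivAt A' (-(K t * A t)) t)
    (hA0 : A 0 = 0) (hA'0 : A' 0 = 1)
    (hinv : ∀ t ≠ (0 : ℝ), IsUnit (A t))
    (hD : ∀ t ≠ (0 : ℝ), ∀ s, HasDerivAt (D t) (D' t s) s)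
    (hD' : ∀ t ≠ (0 : ℝ), ∀ s, HasDerivAt (D' t) (-(K s * D t s)) s)
    (hD0 : ∀ t ≠ (0 : ℝ), D t 0 = 1)
    (hDt : ∀ t ≠ (0 : ℝ), D t t = 0) :
    ∀ s t : ℝ, (0 < s ∧ s < t) ∨ (t < s ∧ s < 0) →
      D t s = A s * ∫ ℓ in s..t, (A ℓ)⁻¹ * ((A ℓ)⁻¹)ᵀ :=
  D_formula_general K A A' D D' hKsymm hA hA' hA0 hA'0 hinv hD hD' hD0 hDt
end
end
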